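/- There is no unit-speed spacelike plane curve (τ ≡ 0) in E₁³ with spacelike principal normal (ε = +1) and nonvanishing curvature whose tangent vector makes a constant Lorentzian timelike angle with a fixed spacelike straight line; precisely, if ψ is a unit-speed spacelike curve with Frenet frame satisfying T' = κN, N' = -κT, B' = 0 with g(N,N)=1, g(B,B)=-1, κ nonvanishing, and d is a fixed unit spacelike vector with g(d, T(s)) = n constant and |n| > 1, then a contradiction follows. -/

import Mathlib

/-!
Differentiating `g(d, T) = n` with `T' = κN` gives `g(d, N) = 0`; differentiating once more
with `N' = -κT` gives `κ n = 0`, so `n = 0`, which is incompatible with `|n| > 1`.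
-/

noncomputable section
open Real

/-- Lorentzian metric of Minkowski 3-space E₁³. -/
def g (u v : ℝ × ℝ × ℝ) : ℝ := -(u.1 * v.1) + u.2.1 * v.2.1 + u.2.2 * v.2.2

def gBilin : (ℝ × ℝ × ℝ) →ₗ[ℝ] (ℝ × ℝ × ℝ) →ₗ[ℝ] ℝ :=
  LinearMap.mk₂ ℝ g
    (fun u₁ u₂ v => by simp only [g, Prod.fst_add, Prod.snd_add]; ring)
    (fun c u v => by simp only [g, Prod.smul_fst, Prod.smul_snd, smul_eq_mul]; ring)
    (fun u v₁ v₂ => by simp only [g, Prod.fst_add, Prod.snd_add]; ring)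
    (fun c u v => by simp only [g, Prod.smul_fst, Prod.smul_snd, smul_eq_mul]; ring)

theorem g_smul_right (d v : ℝ × ℝ × ℝ) (c : ℝ) : g d (c • v) = c * g d v :=
  (gBilin d).map_smul c v

/- No differentiability hypothesis: where `f` is not differentiable, `deriv f s` is the junk
value `0`, which `L` also kills. -/
theorem ContinuousLinearMap.map_deriv_eq_zero_of_comp_const {𝕜 E F : Type*}
    [NontriviallyNormedField 𝕜] [NormedAddCommGroup E] [NormedSpace 𝕜 E]
    [NormedAddCommGroup F] [NormedSpace 𝕜 F] (L : E →L[𝕜] F) {f : 𝕜 → E} {c : F}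
    (hf : ∀ s, L (f s) = c) (s : 𝕜) : L (deriv f s) = 0 := by
  by_cases hdiff : DifferentiableAt 𝕜 f s
  · have hL : HasDerivAt (fun t => L (f t)) (L (deriv f s)) s :=
      L.hasFDerivAt.comp_hasDerivAt s hdiff.hasDerivAt
    simp only [hf] at hL
    exact hL.unique (hasDerivAt_const s c)
  · rw [deriv_zero_of_not_differentiableAt hdiff, map_zero]

theorem g_deriv_eq_zero_of_g_const {f : ℝ → ℝ × ℝ × ℝ} {d : ℝ × ℝ × ℝ} {c : ℝ}
    (hf : ∀ s, g d (f s) = c) (s : ℝ) : g d (deriv f s) = 0 :=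
  (LinearMap.toContinuousLinearMap (gBilin d)).map_deriv_eq_zero_of_comp_const hf s

theorem stmt3_general (T N : ℝ → ℝ × ℝ × ℝ) (κ : ℝ → ℝ) (d : ℝ × ℝ × ℝ) (n : ℝ)
    (hκ : ∀ s, κ s ≠ 0)
    (hFr1 : ∀ s, deriv T s = κ s • N s)
    (hFr2 : ∀ s, deriv N s = (-(κ s)) • T s)
    (hdT : ∀ s, g d (T s) = n) (hn : |n| > 1) :
    False := by
  have hdN : ∀ s, g d (N s) = 0 := fun s => by
    have h := g_deriv_eq_zero_of_g_const hdT s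
    rw [hFr1, g_smul_right] at h
    exact (mul_eq_zero.mp h).resolve_left (hκ s)
  have hn0 : n = 0 := by
    have h := g_deriv_eq_zero_of_g_const hdN 0
    rw [hFr2, g_smul_right, hdT] at h
    exact (mul_eq_zero.mp h).resolve_left (neg_ne_zero.mpr (hκ 0))
  norm_num [hn0] at hn

theorem stmt3 (ψ T N B : ℝ → ℝ × ℝ × ℝ) (κ : ℝ → ℝ) (d : ℝ × ℝ × ℝ) (n : ℝ)
    (hκ : ∀ s, κ s ≠ 0)
    (hT : ∀ s, deriv ψ s = T s)
    (hFr1 : ∀ s, deriv T s = κ s • N s)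
    (hFr2 : ∀ s, deriv N s = (-(κ s)) • T s)
    (hFr3 : ∀ s, deriv B s = 0)
    (hTT : ∀ s, g (T s) (T s) = 1)
    (hNN : ∀ s, g (N s) (N s) = 1)
    (hBB : ∀ s, g (B s) (B s) = -1)
    (hTN : ∀ s, g (T s) (N s) = 0)
    (hTB : ∀ s, g (T s) (B s) = 0)
    (hNB : ∀ s, g (N s) (B s) = 0)
    (hd : g d d = 1)
    (hdT : ∀ s, g d (T s) = n) (hn : |n| > 1) :
    False :=
  stmt3_general T N κ d n hκ hFr1 hFr2 hdT hn
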